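/- Uniform stability of approximate filtering distributions (stability clause of Theorem 3.8): Suppose μ_prior is supported on a ball, i.e. μ_prior({ū ∈ X : ‖ū‖_X ≤ M}) = 1 for some M > 0. Then for every R > 0 and Λ > 0 there exists C = C(R, ρ, N, M, Λ) > 0 such that: for every Borel measurable forward operator S^Δ : [0,T] × X → X satisfying the energy bound ‖S^Δ_t(ū)‖_X ≤ ‖ū‖_X for all t, ū, and all Borel measurable observables L^Δ_1, …, L^Δ_N : X → ℝ^d with ‖L^Δ_j‖_{L²(μ_prior)} ≤ Λ for each j, the associated filtering distributions ν^{Δ,y}_t satisfy W1(ν^{Δ,y}_t, ν^{Δ,y'}_t) ≤ C |y − y'|_Γ for all t ∈ [0,T] and all y, y' ∈ (ℝ^d)^N with |y|_Γ ≤ R and |y'|_Γ ≤ R. In particular, the Lipschitz constant is independent of the discretization parameter Δ. -/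

import Mathlib

open MeasureTheory
open scoped BigOperators ENNReal Matrix

noncomputable section

/-- The Γ-weighted norm `|y|_Γ = sqrt ⟨y, Γ⁻¹ y⟩` on `ℝ^d`. -/
def gammaNorm {d : ℕ} (Γ : Matrix (Fin d) (Fin d) ℝ) (y : Fin d → ℝ) : ℝ :=
  Real.sqrt (y ⬝ᵥ (Γ⁻¹).mulVec y)

/-- The Γ-norm of a tuple of measurements: `(Σ_k |y_k|_Γ²)^{1/2}`. -/
def gammaNormTuple {d N : ℕ} (Γ : Matrix (Fin d) (Fin d) ℝ) (y : Fin N → Fin d → ℝ) : ℝ :=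
  Real.sqrt (∑ k, (gammaNorm Γ (y k)) ^ 2)

/-- A noise density satisfying (N.1)–(N.3). -/
structure IsNoiseDensity {d : ℕ} (Γ : Matrix (Fin d) (Fin d) ℝ) (ρ : (Fin d → ℝ) → ℝ)
    (Lρ Cb Ct : ℝ) : Prop where
  Lρ_pos : 0 < Lρ
  Cb_pos : 0 < Cb
  Ct_pos : 0 < Ct
  pos : ∀ y, 0 < ρ y
  lip : ∀ y y', |ρ y - ρ y'| ≤ Lρ * gammaNorm Γ (y - y')
  bdd : ∀ y, ρ y ≤ Cb
  tail : ∀ y, Ct⁻¹ * Real.exp (-(1 / 2) * (gammaNorm Γ y) ^ 2) ≤ ρ y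

/-- Wasserstein-1 distance in Kantorovich–Rubinstein dual form. -/
def W1 {X : Type*} [NormedAddCommGroup X] [MeasurableSpace X] (μ ν : Measure X) : ℝ :=
  sSup {r : ℝ | ∃ Φ : X → ℝ, LipschitzWith 1 Φ ∧ Φ 0 = 0 ∧
    r = (∫ u, Φ u ∂μ) - ∫ u, Φ u ∂ν}

/-- Unnormalized posterior density given the first `k` measurements. -/
def postDensity {X : Type*} {d N : ℕ} (ρ : (Fin d → ℝ) → ℝ)
    (L : Fin N → X → Fin d → ℝ) (y : Fin N → Fin d → ℝ) (k : ℕ) (u : X) : ℝ :=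
  ∏ j ∈ Finset.univ.filter (fun j : Fin N => (j : ℕ) < k), ρ (y j - L j u)

/-- Normalization constant `Z_k(y_{1:k})`. -/
def postZ {X : Type*} [MeasurableSpace X] {d N : ℕ} (μp : Measure X) (ρ : (Fin d → ℝ) → ℝ)
    (L : Fin N → X → Fin d → ℝ) (y : Fin N → Fin d → ℝ) (k : ℕ) : ℝ :=
  ∫ u, postDensity ρ L y k u ∂μp

/-- Bayesian posterior `μ^{y_{1:k}}` on the initial data. -/
def posteriorK {X : Type*} [MeasurableSpace X] {d N : ℕ} (μp : Measure X)
    (ρ : (Fin d → ℝ) → ℝ) (L : Fin N → X → Fin d → ℝ) (y : Fin N → Fin d → ℝ) (k : ℕ) :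
    Measure X :=
  μp.withDensity fun u => ENNReal.ofReal (postDensity ρ L y k u / postZ μp ρ L y k)

/-- The number of measurement times `t_j` (j = 1, …, N) with `t_j ≤ t`; for
`t ∈ [t_k, t_{k+1})` this equals `k`, and it equals `N` for `t = t_N = T`. -/
def numObs {N : ℕ} (ts : Fin (N + 1) → ℝ) (t : ℝ) : ℕ :=
  (Finset.univ.filter (fun j : Fin N => ts j.succ ≤ t)).card

/-- The filtering distribution `ν^y_t = (S_t)_# μ^{y_{1:k}}` for `t ∈ [t_k, t_{k+1})`. -/
def filteringDist {X : Type*} [MeasurableSpace X] {d N : ℕ} (μp : Measure X)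
    (ρ : (Fin d → ℝ) → ℝ) (ts : Fin (N + 1) → ℝ) (S : ℝ → X → X)
    (L : Fin N → X → Fin d → ℝ) (y : Fin N → Fin d → ℝ) (t : ℝ) : Measure X :=
  (posteriorK μp ρ L y (numObs ts t)).map (S t)

/-! Integrating a 1-Lipschitz test function `Φ` against `ν^y_t` means integrating `Φ ∘ S^Δ_t`
against the prior reweighted by the density `∏_j ρ(y_j - L_j u) / Z(y)`. The prior lives on the
ball of radius `M` and `S^Δ_t` does not increase norms, so `|Φ ∘ S^Δ_t| ≤ M` almost surely and it
suffices to compare the densities uniformly. Each factor `ρ` is bounded and Lipschitz, so the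
unnormalised densities, and hence the normalising constants `Z`, differ by `O(|y - y'|_Γ)`. What
remains is a lower bound on `Z` independent of `Δ`: by Chebyshev's inequality all observables
satisfy `|L_j u|_Γ² < 2NΛ²` on a set of prior mass at least `1/2`, and there the Gaussian tail
bound (N.3) bounds the density from below. -/

theorem abs_prod_sub_prod_le {ι : Type*} (s : Finset ι) {a b : ι → ℝ} {B δ : ℝ} (hB : 1 ≤ B)
    (ha : ∀ j ∈ s, |a j| ≤ B) (hb : ∀ j ∈ s, |b j| ≤ B) (hab : ∀ j ∈ s, |a j - b j| ≤ δ) :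
    |∏ j ∈ s, a j - ∏ j ∈ s, b j| ≤ B ^ s.card * s.card * δ := by
  classical
  induction s using Finset.cons_induction with
  | empty => simp
  | cons i s hi ih =>
    simp only [Finset.forall_mem_cons] at ha hb hab
    have hδ : 0 ≤ δ := (abs_nonneg _).trans hab.1
    have hprod_b : |∏ j ∈ s, b j| ≤ B ^ s.card := by
      rw [Finset.abs_prod, ← Finset.prod_const]
      exact Finset.prod_le_prod (fun j _ => abs_nonneg _) hb.2
    have htelescope : a i * ∏ j ∈ s, a j - b i * ∏ j ∈ s, b j
        = a i * (∏ j ∈ s, a j - ∏ j ∈ s, b j) + (a i - b i) * ∏ j ∈ s, b j := by ring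
    rw [Finset.prod_cons, Finset.prod_cons, htelescope, Finset.card_cons]
    calc _ ≤ |a i| * |∏ j ∈ s, a j - ∏ j ∈ s, b j| + |a i - b i| * |∏ j ∈ s, b j| :=
          (abs_add_le _ _).trans_eq (by rw [abs_mul, abs_mul])
      _ ≤ B * (B ^ s.card * s.card * δ) + δ * B ^ s.card := by
          gcongr
          exacts [ha.1, ih ha.2 hb.2 hab.2, hab.1]
      _ ≤ B ^ (s.card + 1) * ↑(s.card + 1) * δ := by
          have : 1 * (B ^ s.card * δ) ≤ B * (B ^ s.card * δ) :=
            mul_le_mul_of_nonneg_right hB (mul_nonneg (pow_nonneg (zero_le_one.trans hB) _) hδ)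
          rw [pow_succ]
          push_cast
          linarith

theorem abs_div_sub_div_le {a b x y B δ c : ℝ} (hc : 0 < c) (hx : c ≤ x) (hy : c ≤ y)
    (hb : |b| ≤ B) (hab : |a - b| ≤ δ) (hxy : |x - y| ≤ δ) :
    |a / x - b / y| ≤ δ / c + B * δ / c ^ 2 := by
  have hx0 : 0 < x := hc.trans_le hx
  have hy0 : 0 < y := hc.trans_le hy
  have hsplit : a / x - b / y = (a - b) / x + b * (y - x) / (x * y) := by
    field_simp
    ring
  rw [hsplit]
  refine (abs_add_le _ _).trans (add_le_add ?_ ?_)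
  · rw [abs_div, abs_of_pos hx0]
    exact div_le_div₀ ((abs_nonneg _).trans hab) hab hc hx
  · rw [abs_div, abs_mul, abs_of_pos (mul_pos hx0 hy0), abs_sub_comm, sq]
    exact div_le_div₀ (mul_nonneg ((abs_nonneg _).trans hb) ((abs_nonneg _).trans hxy))
      (mul_le_mul hb hxy (abs_nonneg _) ((abs_nonneg _).trans hb)) (mul_pos hc hc)
      (mul_le_mul hx hy hc.le hx0.le)

section Wasserstein

variable {X : Type*} [NormedAddCommGroup X] [MeasurableSpace X]

theorem W1_le {μ ν : Measure X} {b : ℝ} (hb : 0 ≤ b)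
    (h : ∀ Φ : X → ℝ, LipschitzWith 1 Φ → Φ 0 = 0 → ∫ u, Φ u ∂μ - ∫ u, Φ u ∂ν ≤ b) :
    W1 μ ν ≤ b :=
  Real.sSup_le (by rintro _ ⟨Φ, hΦ, hΦ0, rfl⟩; exact h Φ hΦ hΦ0) hb

end Wasserstein

section Reweighting

variable {X : Type*} [MeasurableSpace X] {μ : Measure X}

theorem integral_withDensity_ofReal {f : X → ℝ} (hf : Measurable f) (hf0 : ∀ x, 0 ≤ f x)
    (g : X → ℝ) :
    ∫ x, g x ∂μ.withDensity (fun x => ENNReal.ofReal (f x)) = ∫ x, f x * g x ∂μ := by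
  rw [integral_withDensity_eq_integral_toReal_smul hf.ennreal_ofReal
    (ae_of_all _ fun _ => ENNReal.ofReal_lt_top)]
  simp only [ENNReal.toReal_ofReal (hf0 _), smul_eq_mul]

variable [IsProbabilityMeasure μ]

theorem integral_withDensity_normalized_sub_le {f g ψ : X → ℝ} {B δ c M : ℝ}
    (hf : Measurable f) (hg : Measurable g) (hf0 : ∀ x, 0 ≤ f x) (hg0 : ∀ x, 0 ≤ g x)
    (hfB : ∀ x, f x ≤ B) (hgB : ∀ x, g x ≤ B) (hfg : ∀ x, |f x - g x| ≤ δ)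
    (hc : 0 < c) (hcf : c ≤ ∫ x, f x ∂μ) (hcg : c ≤ ∫ x, g x ∂μ)
    (hψ : AEStronglyMeasurable ψ μ) (hψM : ∀ᵐ x ∂μ, |ψ x| ≤ M) :
    ∫ x, ψ x ∂μ.withDensity (fun x => ENNReal.ofReal (f x / ∫ x, f x ∂μ))
      - ∫ x, ψ x ∂μ.withDensity (fun x => ENNReal.ofReal (g x / ∫ x, g x ∂μ))
      ≤ M * (δ / c + B * δ / c ^ 2) := by
  have hint : ∀ h : X → ℝ, Measurable h → (∀ x, 0 ≤ h x) → (∀ x, h x ≤ B) →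
      Integrable h μ := fun h hm h0 hB =>
    Integrable.of_bound hm.aestronglyMeasurable B
      (ae_of_all _ fun x => by rw [Real.norm_eq_abs, abs_of_nonneg (h0 x)]; exact hB x)
  have hψM' : ∀ᵐ x ∂μ, ‖ψ x‖ ≤ M := by simpa only [Real.norm_eq_abs] using hψM
  have hZ : |∫ x, f x ∂μ - ∫ x, g x ∂μ| ≤ δ := by
    rw [← integral_sub (hint f hf hf0 hfB) (hint g hg hg0 hgB)]
    simpa using norm_integral_le_of_norm_le_const (μ := μ)
      (ae_of_all _ fun x => (Real.norm_eq_abs _).trans_le (hfg x))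
  have hweighted : ∀ h : X → ℝ, Measurable h → (∀ x, 0 ≤ h x) → (∀ x, h x ≤ B) →
      Integrable (fun x => h x / (∫ x, h x ∂μ) * ψ x) μ := fun h hm h0 hB =>
    ((hint h hm h0 hB).div_const _).mul_bdd hψ hψM'
  have hpointwise : ∀ᵐ x ∂μ, ‖f x / (∫ x, f x ∂μ) * ψ x - g x / (∫ x, g x ∂μ) * ψ x‖
      ≤ (δ / c + B * δ / c ^ 2) * M := by
    filter_upwards [hψM] with x hx
    have hδ : 0 ≤ δ := (abs_nonneg _).trans (hfg x)
    have hB : 0 ≤ B := (hg0 x).trans (hgB x)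
    rw [Real.norm_eq_abs, ← sub_mul, abs_mul]
    exact mul_le_mul (abs_div_sub_div_le hc hcf hcg ((abs_of_nonneg (hg0 x)).trans_le (hgB x))
      (hfg x) hZ) hx (abs_nonneg _)
      (add_nonneg (div_nonneg hδ hc.le) (div_nonneg (mul_nonneg hB hδ) (sq_nonneg c)))
  rw [integral_withDensity_ofReal (hf.div_const _) (fun x => div_nonneg (hf0 x) (hc.le.trans hcf)),
    integral_withDensity_ofReal (hg.div_const _) (fun x => div_nonneg (hg0 x) (hc.le.trans hcg)),
    ← integral_sub (hweighted f hf hf0 hfB) (hweighted g hg hg0 hgB)]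
  refine (le_abs_self _).trans ?_
  simpa [mul_comm] using norm_integral_le_of_norm_le_const hpointwise

end Reweighting

theorem one_sub_sum_integral_div_le_measureReal_forall_lt {X ι : Type*} [MeasurableSpace X]
    [Fintype ι] {μ : Measure X} [IsProbabilityMeasure μ] {f : ι → X → ℝ}
    (hf0 : ∀ i, 0 ≤ᵐ[μ] f i) (hf : ∀ i, Integrable (f i) μ) {ε : ℝ} (hε : 0 < ε) :
    1 - ∑ i, (∫ x, f i x ∂μ) / ε ≤ μ.real {x | ∀ i, f i x < ε} := by
  have hcover : Set.univ ⊆ {x | ∀ i, f i x < ε} ∪ ⋃ i, {x | ε ≤ f i x} := fun x _ => by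
    by_cases hx : ∀ i, f i x < ε
    · exact Or.inl hx
    · push Not at hx
      exact Or.inr (Set.mem_iUnion.2 hx)
  have hmarkov : ∀ i, μ.real {x | ε ≤ f i x} ≤ (∫ x, f i x ∂μ) / ε := fun i => by
    rw [le_div_iff₀ hε, mul_comm]
    exact mul_meas_ge_le_integral_of_nonneg (hf0 i) (hf i) ε
  calc 1 - ∑ i, (∫ x, f i x ∂μ) / ε ≤ μ.real Set.univ - ∑ i, μ.real {x | ε ≤ f i x} := by
        rw [probReal_univ]
        gcongr with i
        exact hmarkov i
    _ ≤ μ.real {x | ∀ i, f i x < ε} := by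
        have := (measureReal_mono hcover (measure_ne_top μ _)).trans (measureReal_union_le _ _)
        linarith [measureReal_iUnion_fintype_le (μ := μ) fun i => {x | ε ≤ f i x}]

section GammaNorm

variable {d : ℕ} {Γ : Matrix (Fin d) (Fin d) ℝ}

theorem gammaNorm_sq (hΓ : Γ.PosDef) (z : Fin d → ℝ) :
    gammaNorm Γ z ^ 2 = z ⬝ᵥ Γ⁻¹ *ᵥ z :=
  Real.sq_sqrt (by simpa using hΓ.inv.posSemidef.re_dotProduct_nonneg z)

theorem gammaNorm_sub_sq_le (hΓ : Γ.PosDef) (a b : Fin d → ℝ) :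
    gammaNorm Γ (a - b) ^ 2 ≤ 2 * gammaNorm Γ a ^ 2 + 2 * gammaNorm Γ b ^ 2 := by
  -- the parallelogram identity for the quadratic form of `Γ⁻¹`
  have hplus := sq_nonneg (gammaNorm Γ (a + b))
  rw [gammaNorm_sq hΓ] at hplus
  rw [gammaNorm_sq hΓ, gammaNorm_sq hΓ, gammaNorm_sq hΓ]
  simp only [Matrix.mulVec_add, Matrix.mulVec_sub, add_dotProduct, sub_dotProduct,
    dotProduct_add, dotProduct_sub] at hplus ⊢
  linarith

theorem continuous_gammaNorm : Continuous (gammaNorm Γ) := by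
  unfold gammaNorm
  simp only [dotProduct, Matrix.mulVec]
  fun_prop

theorem gammaNormTuple_sq {N : ℕ} (y : Fin N → Fin d → ℝ) :
    gammaNormTuple Γ y ^ 2 = ∑ k, gammaNorm Γ (y k) ^ 2 :=
  Real.sq_sqrt (Finset.sum_nonneg fun _ _ => sq_nonneg _)

theorem gammaNorm_le_gammaNormTuple {N : ℕ} (y : Fin N → Fin d → ℝ) (j : Fin N) :
    gammaNorm Γ (y j) ≤ gammaNormTuple Γ y :=
  (Real.le_sqrt (Real.sqrt_nonneg _) (Finset.sum_nonneg fun _ _ => sq_nonneg _)).2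
    (Finset.single_le_sum (f := fun k => gammaNorm Γ (y k) ^ 2) (fun _ _ => sq_nonneg _)
      (Finset.mem_univ j))

theorem IsNoiseDensity.continuous {ρ : (Fin d → ℝ) → ℝ} {Lρ Cb Ct : ℝ}
    (hρ : IsNoiseDensity Γ ρ Lρ Cb Ct) : Continuous ρ := by
  refine continuous_iff_continuousAt.2 fun y₀ => tendsto_iff_norm_sub_tendsto_zero.2 ?_
  have hcont : Continuous fun y => Lρ * gammaNorm Γ (y - y₀) :=
    continuous_const.mul (continuous_gammaNorm.comp (continuous_id.sub continuous_const))
  exact squeeze_zero (fun _ => norm_nonneg _) (fun y => hρ.lip y y₀)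
    (hcont.tendsto' y₀ 0 (by simp [gammaNorm]))

end GammaNorm

section Posterior

variable {X : Type*} {d N : ℕ} {Γ : Matrix (Fin d) (Fin d) ℝ} {ρ : (Fin d → ℝ) → ℝ}
  {Lρ Cb Ct : ℝ} {L : Fin N → X → Fin d → ℝ} {y y' : Fin N → Fin d → ℝ} {k : ℕ}

theorem card_filter_fin_val_lt_le (N k : ℕ) :
    (Finset.univ.filter fun j : Fin N => (j : ℕ) < k).card ≤ N :=
  (Finset.card_filter_le _ _).trans_eq (Finset.card_fin N)

theorem postDensity_pos (hρ : IsNoiseDensity Γ ρ Lρ Cb Ct) (u : X) :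
    0 < postDensity ρ L y k u :=
  Finset.prod_pos fun _ _ => hρ.pos _

theorem IsNoiseDensity.abs_le (hρ : IsNoiseDensity Γ ρ Lρ Cb Ct) (z : Fin d → ℝ) :
    |ρ z| ≤ max 1 Cb :=
  (abs_of_pos (hρ.pos z)).trans_le ((hρ.bdd z).trans (le_max_right _ _))

theorem postDensity_le (hρ : IsNoiseDensity Γ ρ Lρ Cb Ct) (u : X) :
    postDensity ρ L y k u ≤ max 1 Cb ^ N := by
  calc postDensity ρ L y k u
        ≤ ∏ _j ∈ Finset.univ.filter (fun j : Fin N => (j : ℕ) < k), max 1 Cb :=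
        Finset.prod_le_prod (fun _ _ => (hρ.pos _).le) fun _ _ =>
          (le_abs_self _).trans (hρ.abs_le _)
    _ ≤ max 1 Cb ^ N := by
        rw [Finset.prod_const]
        exact pow_le_pow_right₀ (le_max_left _ _) (card_filter_fin_val_lt_le N k)

theorem abs_postDensity_sub_le (hρ : IsNoiseDensity Γ ρ Lρ Cb Ct) (u : X) :
    |postDensity ρ L y k u - postDensity ρ L y' k u|
      ≤ max 1 Cb ^ N * N * (Lρ * gammaNormTuple Γ (y - y')) := by
  have hlip : ∀ j, |ρ (y j - L j u) - ρ (y' j - L j u)| ≤ Lρ * gammaNormTuple Γ (y - y') :=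
    fun j => calc
      _ ≤ Lρ * gammaNorm Γ ((y - y') j) := by simpa using hρ.lip (y j - L j u) (y' j - L j u)
      _ ≤ Lρ * gammaNormTuple Γ (y - y') :=
          mul_le_mul_of_nonneg_left (gammaNorm_le_gammaNormTuple _ j) hρ.Lρ_pos.le
  refine (abs_prod_sub_prod_le _ (le_max_left 1 Cb) (fun j _ => hρ.abs_le _)
    (fun j _ => hρ.abs_le _) fun j _ => hlip j).trans ?_
  have hcard := card_filter_fin_val_lt_le N k
  have hδ : 0 ≤ Lρ * gammaNormTuple Γ (y - y') := mul_nonneg hρ.Lρ_pos.le (Real.sqrt_nonneg _)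
  gcongr
  exact le_max_left _ _

theorem postDensity_ge (hΓ : Γ.PosDef) (hρ : IsNoiseDensity Γ ρ Lρ Cb Ct) (u : X) :
    min 1 Ct⁻¹ ^ N * Real.exp (-(gammaNormTuple Γ y ^ 2 + ∑ j, gammaNorm Γ (L j u) ^ 2))
      ≤ postDensity ρ L y k u := by
  set F := Finset.univ.filter fun j : Fin N => (j : ℕ) < k
  have hCt : 0 < Ct⁻¹ := inv_pos.2 hρ.Ct_pos
  have hmin : 0 ≤ min 1 Ct⁻¹ := le_min zero_le_one hCt.le
  have hpow : min 1 Ct⁻¹ ^ N ≤ Ct⁻¹ ^ F.card :=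
    calc min 1 Ct⁻¹ ^ N ≤ min 1 Ct⁻¹ ^ F.card :=
          pow_le_pow_of_le_one hmin (min_le_left _ _) (card_filter_fin_val_lt_le N k)
      _ ≤ Ct⁻¹ ^ F.card := pow_le_pow_left₀ hmin (min_le_right _ _) _
  have hexponent : -(gammaNormTuple Γ y ^ 2 + ∑ j, gammaNorm Γ (L j u) ^ 2)
      ≤ ∑ j ∈ F, -(1 / 2) * gammaNorm Γ (y j - L j u) ^ 2 := by
    rw [gammaNormTuple_sq, ← Finset.sum_add_distrib]
    calc -∑ j, (gammaNorm Γ (y j) ^ 2 + gammaNorm Γ (L j u) ^ 2)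
        ≤ -∑ j ∈ F, (gammaNorm Γ (y j) ^ 2 + gammaNorm Γ (L j u) ^ 2) :=
          neg_le_neg (Finset.sum_le_sum_of_subset_of_nonneg (Finset.filter_subset _ _)
            fun _ _ _ => by positivity)
      _ ≤ ∑ j ∈ F, -(1 / 2) * gammaNorm Γ (y j - L j u) ^ 2 := by
          rw [← Finset.sum_neg_distrib]
          gcongr with j
          linarith [gammaNorm_sub_sq_le hΓ (y j) (L j u)]
  calc _ ≤ Ct⁻¹ ^ F.card * Real.exp (∑ j ∈ F, -(1 / 2) * gammaNorm Γ (y j - L j u) ^ 2) :=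
        mul_le_mul hpow (Real.exp_le_exp.2 hexponent) (Real.exp_pos _).le (by positivity)
    _ = ∏ j ∈ F, Ct⁻¹ * Real.exp (-(1 / 2) * gammaNorm Γ (y j - L j u) ^ 2) := by
        rw [Finset.prod_mul_distrib, Finset.prod_const, Real.exp_sum]
    _ ≤ postDensity ρ L y k u :=
        Finset.prod_le_prod (fun _ _ => by positivity) fun _ _ => hρ.tail _

variable [MeasurableSpace X]

theorem measurable_postDensity (hρ : IsNoiseDensity Γ ρ Lρ Cb Ct) (hL : ∀ j, Measurable (L j)) :
    Measurable (postDensity ρ L y k) :=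
  Finset.measurable_prod _ fun j _ => hρ.continuous.measurable.comp (measurable_const.sub (hL j))

end Posterior

section NormalizingConstant

variable {X : Type*} [MeasurableSpace X] {d N : ℕ} {Γ : Matrix (Fin d) (Fin d) ℝ}
  {ρ : (Fin d → ℝ) → ℝ} {Lρ Cb Ct : ℝ} {L : Fin N → X → Fin d → ℝ} {y : Fin N → Fin d → ℝ}
  {k : ℕ} {μp : Measure X} [IsProbabilityMeasure μp]

theorem integrable_postDensity (hρ : IsNoiseDensity Γ ρ Lρ Cb Ct) (hL : ∀ j, Measurable (L j)) :
    Integrable (postDensity ρ L y k) μp :=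
  Integrable.of_bound (measurable_postDensity hρ hL).aestronglyMeasurable (max 1 Cb ^ N)
    (ae_of_all _ fun u => by
      rw [Real.norm_eq_abs, abs_of_pos (postDensity_pos hρ u)]
      exact postDensity_le hρ u)

theorem postZ_ge (hN : 0 < N) (hΓ : Γ.PosDef) (hρ : IsNoiseDensity Γ ρ Lρ Cb Ct)
    (hL : ∀ j, Measurable (L j)) (hLint : ∀ j, Integrable (fun u => gammaNorm Γ (L j u) ^ 2) μp)
    {Λ R : ℝ} (hΛ : 0 < Λ) (hLΛ : ∀ j, ∫ u, gammaNorm Γ (L j u) ^ 2 ∂μp ≤ Λ ^ 2)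
    (hy : gammaNormTuple Γ y ≤ R) :
    min 1 Ct⁻¹ ^ N * Real.exp (-(R ^ 2 + 2 * N ^ 2 * Λ ^ 2)) / 2 ≤ postZ μp ρ L y k := by
  set c := min 1 Ct⁻¹ ^ N * Real.exp (-(R ^ 2 + 2 * N ^ 2 * Λ ^ 2))
  set ε : ℝ := 2 * N * Λ ^ 2
  have hNpos : (0 : ℝ) < N := Nat.cast_pos.2 hN
  have hε : 0 < ε := by positivity
  have hmin : 0 ≤ min 1 Ct⁻¹ := le_min zero_le_one (inv_pos.2 hρ.Ct_pos).le
  have hc : 0 ≤ c := mul_nonneg (pow_nonneg hmin _) (Real.exp_pos _).le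
  set A := {u | ∀ j, gammaNorm Γ (L j u) ^ 2 < ε}
  have hA : MeasurableSet A := by
    simp only [A, Set.ofPred_forall]
    exact MeasurableSet.iInter fun j =>
      measurableSet_lt ((continuous_gammaNorm.pow 2).measurable.comp (hL j)) measurable_const
  have hμA : 1 / 2 ≤ μp.real A := by
    refine le_trans ?_ (one_sub_sum_integral_div_le_measureReal_forall_lt
      (fun j => ae_of_all _ fun u => sq_nonneg (gammaNorm Γ (L j u))) hLint hε)
    calc (1 : ℝ) / 2 = 1 - ∑ _j : Fin N, Λ ^ 2 / ε := by
          simp only [Finset.sum_const, Finset.card_univ, Fintype.card_fin, nsmul_eq_mul, ε]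
          field_simp
          ring
      _ ≤ _ := by gcongr with j; exact hLΛ j
  have hyR : gammaNormTuple Γ y ^ 2 ≤ R ^ 2 := pow_le_pow_left₀ (Real.sqrt_nonneg _) hy 2
  have hlower : ∀ u ∈ A, c ≤ postDensity ρ L y k u := fun u hu => by
    have hsum : ∑ j, gammaNorm Γ (L j u) ^ 2 ≤ 2 * N ^ 2 * Λ ^ 2 :=
      calc ∑ j, gammaNorm Γ (L j u) ^ 2 ≤ ∑ _j : Fin N, ε := Finset.sum_le_sum fun j _ => (hu j).le
        _ = 2 * N ^ 2 * Λ ^ 2 := by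
          simp only [Finset.sum_const, Finset.card_univ, Fintype.card_fin, nsmul_eq_mul, ε]
          ring
    refine le_trans ?_ (postDensity_ge hΓ hρ u)
    simp only [c]
    gcongr
  have hint := integrable_postDensity (y := y) (k := k) (μp := μp) hρ hL
  calc c / 2 ≤ c * μp.real A := by
        rw [div_eq_mul_one_div]
        gcongr
    _ ≤ ∫ u in A, postDensity ρ L y k u ∂μp :=
        setIntegral_ge_of_const_le_real hA (measure_ne_top _ _) hlower hint.integrableOn
    _ ≤ postZ μp ρ L y k :=
        setIntegral_le_integral hint (ae_of_all _ fun u => (postDensity_pos hρ u).le)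

end NormalizingConstant

theorem approximate_filtering_uniform_stability_general
    {X : Type*} [NormedAddCommGroup X] [MeasurableSpace X] [BorelSpace X]
    {d N : ℕ} (hN : 0 < N)
    (Γ : Matrix (Fin d) (Fin d) ℝ) (hΓ : Γ.PosDef)
    (ρ : (Fin d → ℝ) → ℝ) (Lρ Cb Ct : ℝ) (hρ : IsNoiseDensity Γ ρ Lρ Cb Ct)
    (μp : Measure X) [IsProbabilityMeasure μp]
    (M : ℝ) (hM : 0 < M) (hsupp : μp {u : X | ‖u‖ ≤ M} = 1)
    (T : ℝ)
    (ts : Fin (N + 1) → ℝ) :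
    ∀ R > 0, ∀ Λ > 0, ∃ C > 0,
      ∀ SΔ : ℝ → X → X, (Measurable fun p : ℝ × X => SΔ p.1 p.2) →
        (∀ t ∈ Set.Icc (0 : ℝ) T, ∀ u : X, ‖SΔ t u‖ ≤ ‖u‖) →
      ∀ LΔ : Fin N → X → Fin d → ℝ, (∀ j, Measurable (LΔ j)) →
        (∀ j, Integrable (fun u => (gammaNorm Γ (LΔ j u)) ^ 2) μp ∧
          Real.sqrt (∫ u, (gammaNorm Γ (LΔ j u)) ^ 2 ∂μp) ≤ Λ) →
      ∀ t ∈ Set.Icc (0 : ℝ) T, ∀ y y' : Fin N → Fin d → ℝ,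
        gammaNormTuple Γ y ≤ R → gammaNormTuple Γ y' ≤ R →
        W1 (filteringDist μp ρ ts SΔ LΔ y t) (filteringDist μp ρ ts SΔ LΔ y' t)
          ≤ C * gammaNormTuple Γ (y - y') := by
  intro R _ Λ hΛ
  set B : ℝ := max 1 Cb ^ N
  set c : ℝ := min 1 Ct⁻¹ ^ N * Real.exp (-(R ^ 2 + 2 * N ^ 2 * Λ ^ 2)) / 2
  set K : ℝ := B * N * Lρ
  have hc : 0 < c := by have := lt_min one_pos (inv_pos.2 hρ.Ct_pos); positivity
  have hK : 0 < K := by have := hρ.Lρ_pos; have := Nat.cast_pos (α := ℝ) |>.2 hN; positivity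
  refine ⟨M * (K / c + B * K / c ^ 2), by positivity, ?_⟩
  intro S hS hSnorm L hL hL2 t ht y y' hy hy'
  have hZ : ∀ z, gammaNormTuple Γ z ≤ R → c ≤ postZ μp ρ L z (numObs ts t) := fun z hz =>
    postZ_ge hN hΓ hρ hL (fun j => (hL2 j).1) hΛ
      (fun j => (Real.sqrt_le_left hΛ.le).1 (hL2 j).2) hz
  have hSt : Measurable (S t) := hS.comp (measurable_const.prodMk measurable_id)
  have hball : ∀ᵐ u ∂μp, ‖u‖ ≤ M :=
    (mem_ae_iff_prob_eq_one (isClosed_le continuous_norm continuous_const).measurableSet).2 hsupp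
  refine W1_le (mul_nonneg (by positivity) (Real.sqrt_nonneg _)) fun Φ hΦ hΦ0 => ?_
  have hΦS : ∀ᵐ u ∂μp, |Φ (S t u)| ≤ M := hball.mono fun u hu =>
    calc |Φ (S t u)| ≤ ‖S t u‖ := by simpa [hΦ0] using hΦ.dist_le_mul (S t u) 0
      _ ≤ M := (hSnorm t ht u).trans hu
  rw [filteringDist, filteringDist,
    integral_map hSt.aemeasurable hΦ.continuous.aestronglyMeasurable,
    integral_map hSt.aemeasurable hΦ.continuous.aestronglyMeasurable]
  calc _ ≤ M * (K * gammaNormTuple Γ (y - y') / c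
          + B * (K * gammaNormTuple Γ (y - y')) / c ^ 2) :=
        integral_withDensity_normalized_sub_le (measurable_postDensity hρ hL)
          (measurable_postDensity hρ hL) (fun u => (postDensity_pos hρ u).le)
          (fun u => (postDensity_pos hρ u).le) (postDensity_le hρ) (postDensity_le hρ)
          (fun u => (abs_postDensity_sub_le hρ u).trans_eq (by ring)) hc (hZ y hy) (hZ y' hy')
          (hΦ.continuous.measurable.comp hSt).aestronglyMeasurable hΦS
    _ = _ := by ring

/-- **Theorem 3.8, stability clause: uniform (in Δ) stability of approximate
filtering distributions.** -/
theorem approximate_filtering_uniform_stability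
    {X : Type*} [NormedAddCommGroup X] [NormedSpace ℝ X] [CompleteSpace X]
    [TopologicalSpace.SeparableSpace X] [MeasurableSpace X] [BorelSpace X]
    {d N : ℕ} (hN : 0 < N)
    (Γ : Matrix (Fin d) (Fin d) ℝ) (hΓ : Γ.PosDef)
    (ρ : (Fin d → ℝ) → ℝ) (Lρ Cb Ct : ℝ) (hρ : IsNoiseDensity Γ ρ Lρ Cb Ct)
    (μp : Measure X) [IsProbabilityMeasure μp]
    (M : ℝ) (hM : 0 < M) (hsupp : μp {u : X | ‖u‖ ≤ M} = 1)
    (T : ℝ) (hT : 0 < T)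
    (ts : Fin (N + 1) → ℝ) (hts : StrictMono ts)
    (hts0 : ts 0 = 0) (htsN : ts (Fin.last N) = T) :
    ∀ R > 0, ∀ Λ > 0, ∃ C > 0,
      ∀ SΔ : ℝ → X → X, (Measurable fun p : ℝ × X => SΔ p.1 p.2) →
        (∀ t ∈ Set.Icc (0 : ℝ) T, ∀ u : X, ‖SΔ t u‖ ≤ ‖u‖) →
      ∀ LΔ : Fin N → X → Fin d → ℝ, (∀ j, Measurable (LΔ j)) →
        (∀ j, Integrable (fun u => (gammaNorm Γ (LΔ j u)) ^ 2) μp ∧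
          Real.sqrt (∫ u, (gammaNorm Γ (LΔ j u)) ^ 2 ∂μp) ≤ Λ) →
      ∀ t ∈ Set.Icc (0 : ℝ) T, ∀ y y' : Fin N → Fin d → ℝ,
        gammaNormTuple Γ y ≤ R → gammaNormTuple Γ y' ≤ R →
        W1 (filteringDist μp ρ ts SΔ LΔ y t) (filteringDist μp ρ ts SΔ LΔ y' t)
          ≤ C * gammaNormTuple Γ (y - y') :=
  approximate_filtering_uniform_stability_general hN Γ hΓ ρ Lρ Cb Ct hρ μp M hM hsupp T ts
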